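/- arXiv:2109.06366 — 4 statements merged into one kernel-verified Lean document; each statement's English description precedes it below -/
import Mathlib

section
/- The Cauchy split conditional density integrates to 1: for all n > 0 and z ∈ ℝ, ∫_{−∞}^{∞} (n/(2π))·(z²+4n²)/((n²+x²)(n²+(z−x)²)) dx = 1. -/
open Real MeasureTheory Filter Topology
open scoped Interval

/-!
Write `Q x = x / (n² + x²)`. The integrand is `n / (2π)` times
`(n² + x²)⁻¹ + (n² + (x - z)²)⁻¹ + 2 R x`, where the correction `R = cauchyCorrection n z`
satisfies `z R x = Q x - Q (x - z)`, and `R = Q'` when `z = 0`. The two Cauchy terms contribute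
`π / n` each, and `R` integrates to zero: it is dominated by the Cauchy terms, and
`∫ (Q x - Q (x - z)) dx = 0` for any continuous `Q` vanishing at infinity, because
`x ↦ ∫_{x-z}^x Q` is an antiderivative that vanishes at `±∞`.
-/

section Translation

variable {E : Type*} [NormedAddCommGroup E] [NormedSpace ℝ E] {f : ℝ → E}

theorem tendsto_intervalIntegral_sub_cocompact (hf : Tendsto f (cocompact ℝ) (𝓝 0)) (z : ℝ) :
    Tendsto (fun x => ∫ t in (x - z)..x, f t) (cocompact ℝ) (𝓝 0) := by
  rw [Metric.tendsto_nhds] at hf ⊢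
  intro ε hε
  obtain ⟨K, hK, hKf⟩ :=
    hasBasis_cocompact.eventually_iff.1 (hf (ε / (|z| + 1)) (by positivity))
  filter_upwards [(hK.add (isCompact_uIcc (a := 0) (b := z))).compl_mem_cocompact] with x hx
  have hbound : ∀ t ∈ Ι (x - z) x, ‖f t‖ ≤ ε / (|z| + 1) := by
    intro t ht
    refine (dist_zero_right (f t) ▸ hKf fun htK => hx ⟨t, htK, x - t, ?_, by ring⟩).le
    rw [Set.mem_uIoc] at ht
    rw [Set.mem_uIcc]
    rcases ht with ⟨h₁, h₂⟩ | ⟨h₁, h₂⟩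
    · left; constructor <;> linarith
    · right; constructor <;> linarith
  calc dist (∫ t in (x - z)..x, f t) 0
      ≤ ε / (|z| + 1) * |x - (x - z)| := by
        rw [dist_zero_right]; exact intervalIntegral.norm_integral_le_of_norm_le_const hbound
    _ < ε := by
        rw [sub_sub_cancel, div_mul_eq_mul_div, div_lt_iff₀ (by positivity)]
        nlinarith [abs_nonneg z]

theorem integral_sub_comp_sub_eq_zero [CompleteSpace E] (hfc : Continuous f)
    (hf : Tendsto f (cocompact ℝ) (𝓝 0)) (z : ℝ) (hint : Integrable fun x => f x - f (x - z)) :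
    ∫ x, (f x - f (x - z)) = 0 := by
  have hderiv : ∀ x, HasDerivAt (fun x => ∫ t in (x - z)..x, f t) (f x - f (x - z)) x := by
    intro x
    have hprim (y : ℝ) : HasDerivAt (fun u => ∫ t in (0 : ℝ)..u, f t) (f y) y :=
      (hfc.integral_hasStrictDerivAt 0 y).hasDerivAt
    refine ((hprim x).sub ((hprim (x - z)).comp_sub_const x z)).congr_of_eventuallyEq ?_
    filter_upwards with y
    exact (intervalIntegral.integral_interval_sub_left (hfc.intervalIntegrable _ _)
      (hfc.intervalIntegrable _ _)).symm
  have hlim := tendsto_intervalIntegral_sub_cocompact hf z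
  simpa using integral_of_hasDerivAt_of_tendsto hderiv hint
    (hlim.mono_left atBot_le_cocompact) (hlim.mono_left atTop_le_cocompact)

end Translation

theorem integral_inv_sq_add_sub_sq {n : ℝ} (hn : 0 < n) (a : ℝ) :
    ∫ x, (n ^ 2 + (x - a) ^ 2)⁻¹ = π / n := by
  have hscale (x : ℝ) : (n ^ 2 + x ^ 2)⁻¹ = (n ^ 2)⁻¹ * (1 + (x / n) ^ 2)⁻¹ := by
    field_simp
  simp_rw [integral_sub_right_eq_self (fun x => (n ^ 2 + x ^ 2)⁻¹), hscale, integral_const_mul,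
    Measure.integral_comp_div (fun x => (1 + x ^ 2)⁻¹), integral_univ_inv_one_add_sq, abs_of_pos hn,
    smul_eq_mul]
  field_simp

theorem integrable_inv_sq_add_sub_sq {n : ℝ} (hn : 0 < n) (a : ℝ) :
    Integrable fun x => (n ^ 2 + (x - a) ^ 2)⁻¹ :=
  .of_integral_ne_zero <| by rw [integral_inv_sq_add_sub_sq hn]; positivity

theorem tendsto_div_sq_add_sq_cocompact (n : ℝ) :
    Tendsto (fun x => x / (n ^ 2 + x ^ 2)) (cocompact ℝ) (𝓝 0) := by
  refine squeeze_zero_norm (a := fun x => ‖x‖⁻¹) (fun x => ?_)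
    (tendsto_inv_atTop_zero.comp tendsto_norm_cocompact_atTop)
  rcases eq_or_ne x 0 with rfl | hx
  · simp only [zero_div, norm_zero, inv_zero, le_refl]
  rw [norm_div, Real.norm_of_nonneg (by positivity : 0 ≤ n ^ 2 + x ^ 2), Real.norm_eq_abs,
    div_le_iff₀ (by positivity), ← sq_abs x]
  field_simp
  nlinarith [sq_nonneg n]

theorem hasDerivAt_div_sq_add_sq {n : ℝ} (hn : n ≠ 0) (x : ℝ) :
    HasDerivAt (fun x => x / (n ^ 2 + x ^ 2)) ((n ^ 2 - x ^ 2) / (n ^ 2 + x ^ 2) ^ 2) x := by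
  have hd : HasDerivAt (fun x => n ^ 2 + x ^ 2) (2 * x) x := by
    simpa using (hasDerivAt_pow 2 x).const_add (n ^ 2)
  refine ((hasDerivAt_id' x).div hd (by positivity)).congr_deriv ?_
  ring

noncomputable def cauchyCorrection (n z x : ℝ) : ℝ :=
  (n ^ 2 - x * (x - z)) / ((n ^ 2 + x ^ 2) * (n ^ 2 + (x - z) ^ 2))

theorem abs_cauchyCorrection_le {n : ℝ} (hn : n ≠ 0) (z x : ℝ) :
    |cauchyCorrection n z x| ≤ ((n ^ 2 + x ^ 2)⁻¹ + (n ^ 2 + (x - z) ^ 2)⁻¹) / 2 := by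
  have hA : 0 < n ^ 2 + x ^ 2 := by positivity
  have hB : 0 < n ^ 2 + (x - z) ^ 2 := by positivity
  rw [cauchyCorrection, abs_div, abs_of_pos (mul_pos hA hB), div_le_iff₀ (mul_pos hA hB)]
  field_simp
  cases abs_cases (n ^ 2 - x * (x - z)) <;>
    nlinarith [sq_nonneg (x + (x - z)), sq_nonneg (x - (x - z))]

theorem integrable_cauchyCorrection {n : ℝ} (hn : 0 < n) (z : ℝ) :
    Integrable (cauchyCorrection n z) := by
  have hP := integrable_inv_sq_add_sub_sq hn
  refine (((hP 0).add (hP z)).div_const 2).mono' ?_ (.of_forall fun x => ?_)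
  · exact Measurable.aestronglyMeasurable (by unfold cauchyCorrection; fun_prop)
  · simpa using abs_cauchyCorrection_le hn.ne' z x

theorem integral_cauchyCorrection {n : ℝ} (hn : 0 < n) (z : ℝ) :
    ∫ x, cauchyCorrection n z x = 0 := by
  rcases eq_or_ne z 0 with rfl | hz
  · have hderiv (x : ℝ) : HasDerivAt (fun x => x / (n ^ 2 + x ^ 2)) (cauchyCorrection n 0 x) x := by
      convert hasDerivAt_div_sq_add_sq hn.ne' x using 1
      rw [cauchyCorrection]
      ring
    have hlim := tendsto_div_sq_add_sq_cocompact n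
    simpa using integral_of_hasDerivAt_of_tendsto hderiv (integrable_cauchyCorrection hn 0)
      (hlim.mono_left atBot_le_cocompact) (hlim.mono_left atTop_le_cocompact)
  · have hdiff (x : ℝ) : z * cauchyCorrection n z x
        = x / (n ^ 2 + x ^ 2) - (x - z) / (n ^ 2 + (x - z) ^ 2) := by
      have hA : n ^ 2 + x ^ 2 ≠ 0 := by positivity
      have hB : n ^ 2 + (x - z) ^ 2 ≠ 0 := by positivity
      rw [cauchyCorrection]
      field_simp
      ring
    have hzero := integral_sub_comp_sub_eq_zero (f := fun x => x / (n ^ 2 + x ^ 2))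
      (continuous_id.div (by fun_prop) fun x => by positivity) (tendsto_div_sq_add_sq_cocompact n) z
      (by simpa only [hdiff] using (integrable_cauchyCorrection hn z).const_mul z)
    simp_rw [← hdiff, integral_const_mul] at hzero
    exact (mul_eq_zero.1 hzero).resolve_left hz

theorem sq_add_four_mul_sq_div_eq_add_cauchyCorrection {n : ℝ} (hn : n ≠ 0) (z x : ℝ) :
    (z ^ 2 + 4 * n ^ 2) / ((n ^ 2 + x ^ 2) * (n ^ 2 + (z - x) ^ 2))
      = (n ^ 2 + x ^ 2)⁻¹ + (n ^ 2 + (x - z) ^ 2)⁻¹ + 2 * cauchyCorrection n z x := by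
  have hA : n ^ 2 + x ^ 2 ≠ 0 := by positivity
  have hB : n ^ 2 + (x - z) ^ 2 ≠ 0 := by positivity
  rw [cauchyCorrection, sub_sq_comm z x]
  field_simp
  ring

/-- The Cauchy split conditional density integrates to 1: for all `n > 0` and
`z ∈ ℝ`, `∫ (n/(2π))·(z²+4n²)/((n²+x²)(n²+(z−x)²)) dx = 1`. -/
theorem stmt_8 (n z : ℝ) (hn : 0 < n) :
    ∫ x : ℝ,
      n / (2 * π) * ((z ^ 2 + 4 * n ^ 2) / ((n ^ 2 + x ^ 2) * (n ^ 2 + (z - x) ^ 2))) = 1 := by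
  have hP₀ : Integrable fun x : ℝ => (n ^ 2 + x ^ 2)⁻¹ := by
    simpa using integrable_inv_sq_add_sub_sq hn 0
  have hP_z := integrable_inv_sq_add_sub_sq hn z
  have hI₀ : ∫ x, (n ^ 2 + x ^ 2)⁻¹ = π / n := by simpa using integral_inv_sq_add_sub_sq hn 0
  simp_rw [sq_add_four_mul_sq_div_eq_add_cauchyCorrection hn.ne']
  rw [integral_const_mul,
    integral_add (hP₀.fun_add hP_z) ((integrable_cauchyCorrection hn z).const_mul 2),
    integral_add hP₀ hP_z, integral_const_mul, hI₀, integral_inv_sq_add_sub_sq hn,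
    integral_cauchyCorrection hn]
  field_simp
  ring
end

section
/- The convolution of two Cauchy(0,n) densities equals the Cauchy(0,2n) density: for all n > 0 and z ∈ ℝ, ∫_{−∞}^{∞} [n/(π(n²+x²))]·[n/(π(n²+(z−x)²))] dx = 2n/(π(4n²+z²)). -/
/-!
Up to the factor `n² / π²` the integrand is `1 / (p q)` with `p = n² + x²`, `q = n² + (z - x)²`.
Since `4n² + z² = p + q + 2 (n² + x (z - x))`, an antiderivative of `(4n² + z²) / (p q)` is
`(arctan (x / n) + arctan ((x - z) / n)) / n` plus twice an antiderivative of
`(n² + x (z - x)) / (p q)`. The latter can be taken to vanish at infinity (it is `x / p` if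
`z = 0` and `log (p / q) / (2 z)` otherwise), so only the arctangents contribute, with total
variation `2π / n`.
-/

open Real MeasureTheory Filter Topology Bornology

theorem tendsto_cobounded_of_eq_comp_inv {f g : ℝ → ℝ} (hg : ContinuousAt g 0)
    (hfg : ∀ x ≠ 0, f x = g x⁻¹) : Tendsto f (cobounded ℝ) (𝓝 (g 0)) := by
  refine (hg.tendsto.comp tendsto_inv₀_cobounded).congr' ?_
  filter_upwards [eventually_ne_cobounded 0] with x hx using (hfg x hx).symm

theorem tendsto_arctan_sub_div_atTop {n : ℝ} (hn : 0 < n) (a : ℝ) :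
    Tendsto (fun x => arctan ((x - a) / n)) atTop (𝓝 (π / 2)) :=
  (tendsto_nhds_of_tendsto_nhdsWithin tendsto_arctan_atTop).comp
    ((tendsto_atTop_add_const_right _ (-a) tendsto_id).atTop_div_const hn)

theorem tendsto_arctan_sub_div_atBot {n : ℝ} (hn : 0 < n) (a : ℝ) :
    Tendsto (fun x => arctan ((x - a) / n)) atBot (𝓝 (-(π / 2))) :=
  (tendsto_nhds_of_tendsto_nhdsWithin tendsto_arctan_atBot).comp
    ((tendsto_atBot_add_const_right _ (-a) tendsto_id).atBot_div_const hn)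

theorem hasDerivAt_arctan_sub_div {n : ℝ} (hn : n ≠ 0) (a x : ℝ) :
    HasDerivAt (fun x => arctan ((x - a) / n) / n) (1 / (n ^ 2 + (x - a) ^ 2)) x := by
  refine ((((hasDerivAt_id' x).sub_const a).div_const n).arctan.div_const n).congr_deriv ?_
  field_simp

theorem integrable_inv_sq_add_sq {n : ℝ} (hn : n ≠ 0) :
    Integrable fun x : ℝ => 1 / (n ^ 2 + x ^ 2) := by
  convert (integrable_inv_one_add_sq.comp_div hn).const_mul (1 / n ^ 2) using 2 with x
  field_simp

theorem exists_hasDerivAt_tendsto_cobounded_zero {n : ℝ} (hn : n ≠ 0) (z : ℝ) :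
    ∃ W : ℝ → ℝ, (∀ x, HasDerivAt W
        ((n ^ 2 + x * (z - x)) / ((n ^ 2 + x ^ 2) * (n ^ 2 + (z - x) ^ 2))) x) ∧
      Tendsto W (cobounded ℝ) (𝓝 0) := by
  rcases eq_or_ne z 0 with rfl | hz
  · refine ⟨fun x => x / (n ^ 2 + x ^ 2), fun x => ?_, ?_⟩
    · have hp : n ^ 2 + x ^ 2 ≠ 0 := by positivity
      refine ((hasDerivAt_id' x).div ((hasDerivAt_pow 2 x).const_add _) hp).congr_deriv ?_
      field_simp
      ring
    · have hg : ContinuousAt (fun t : ℝ => t / (n ^ 2 * t ^ 2 + 1)) 0 := by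
        fun_prop (disch := positivity)
      simpa using tendsto_cobounded_of_eq_comp_inv hg fun x hx => by field_simp
  · refine ⟨fun x => (log (n ^ 2 + x ^ 2) - log (n ^ 2 + (z - x) ^ 2)) / (2 * z),
      fun x => ?_, ?_⟩
    · have hp : n ^ 2 + x ^ 2 ≠ 0 := by positivity
      have hq : n ^ 2 + (z - x) ^ 2 ≠ 0 := by positivity
      have hlog_p := ((hasDerivAt_pow 2 x).const_add (n ^ 2)).log hp
      have hlog_q := ((((hasDerivAt_id' x).const_sub z).fun_pow 2).const_add (n ^ 2)).log hq
      refine ((hlog_p.sub hlog_q).div_const _).congr_deriv ?_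
      field_simp
      ring
    · have hg : ContinuousAt (fun t : ℝ =>
          log ((n ^ 2 * t ^ 2 + 1) / (n ^ 2 * t ^ 2 + (z * t - 1) ^ 2)) / (2 * z)) 0 := by
        fun_prop (disch := norm_num)
      refine (tendsto_cobounded_of_eq_comp_inv hg fun x hx => ?_).trans (by simp)
      have hp : n ^ 2 + x ^ 2 ≠ 0 := by positivity
      have hq : n ^ 2 + (z - x) ^ 2 ≠ 0 := by positivity
      rw [← log_div hp hq]
      congr 2
      field_simp

theorem integrable_one_div_mul_sq_add_sq {n : ℝ} (hn : n ≠ 0) (z : ℝ) :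
    Integrable fun x : ℝ => 1 / ((n ^ 2 + x ^ 2) * (n ^ 2 + (z - x) ^ 2)) := by
  refine ((integrable_inv_sq_add_sq hn).const_mul (1 / n ^ 2)).mono'
    (by fun_prop : Measurable _).aestronglyMeasurable (ae_of_all _ fun x => ?_)
  rw [norm_of_nonneg (by positivity), ← one_div_mul_one_div, mul_comm]
  gcongr
  nlinarith [sq_nonneg (z - x)]

theorem integral_one_div_mul_sq_add_sq {n : ℝ} (hn : 0 < n) (z : ℝ) :
    ∫ x : ℝ, 1 / ((n ^ 2 + x ^ 2) * (n ^ 2 + (z - x) ^ 2)) =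
      2 * π / (n * (4 * n ^ 2 + z ^ 2)) := by
  obtain ⟨W, hW, hW_lim⟩ := exists_hasDerivAt_tendsto_cobounded_zero hn.ne' z
  set F : ℝ → ℝ := fun x =>
    (arctan ((x - 0) / n) / n + arctan ((x - z) / n) / n + 2 * W x) / (4 * n ^ 2 + z ^ 2)
  have hF : ∀ x, HasDerivAt F (1 / ((n ^ 2 + x ^ 2) * (n ^ 2 + (z - x) ^ 2))) x := fun x => by
    refine ((((hasDerivAt_arctan_sub_div hn.ne' 0 x).add
      (hasDerivAt_arctan_sub_div hn.ne' z x)).add ((hW x).const_mul 2)).div_const _).congr_deriv ?_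
    have : n ^ 2 + x ^ 2 ≠ 0 := by positivity
    have : n ^ 2 + (z - x) ^ 2 ≠ 0 := by positivity
    field_simp
    ring
  have hF_top : Tendsto F atTop (𝓝 ((π / 2 / n + π / 2 / n + 2 * 0) / (4 * n ^ 2 + z ^ 2))) :=
    ((((tendsto_arctan_sub_div_atTop hn 0).div_const n).add
      ((tendsto_arctan_sub_div_atTop hn z).div_const n)).add
      ((hW_lim.mono_left IsOrderBornology.atTop_le_cobounded).const_mul 2)).div_const _
  have hF_bot :
      Tendsto F atBot (𝓝 ((-(π / 2) / n + -(π / 2) / n + 2 * 0) / (4 * n ^ 2 + z ^ 2))) :=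
    ((((tendsto_arctan_sub_div_atBot hn 0).div_const n).add
      ((tendsto_arctan_sub_div_atBot hn z).div_const n)).add
      ((hW_lim.mono_left IsOrderBornology.atBot_le_cobounded).const_mul 2)).div_const _
  rw [integral_of_hasDerivAt_of_tendsto hF (integrable_one_div_mul_sq_add_sq hn.ne' z)
    hF_bot hF_top]
  field_simp
  ring

/-- The convolution of two `Cauchy(0,n)` densities equals the `Cauchy(0,2n)`
density: for all `n > 0` and `z ∈ ℝ`,
`∫ [n/(π(n²+x²))]·[n/(π(n²+(z−x)²))] dx = 2n/(π(4n²+z²))`. -/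
theorem stmt_9 (n z : ℝ) (hn : 0 < n) :
    ∫ x : ℝ, (n / (π * (n ^ 2 + x ^ 2))) * (n / (π * (n ^ 2 + (z - x) ^ 2))) =
      2 * n / (π * (4 * n ^ 2 + z ^ 2)) := by
  have h_integrand : ∀ x : ℝ,
      (n / (π * (n ^ 2 + x ^ 2))) * (n / (π * (n ^ 2 + (z - x) ^ 2))) =
        n ^ 2 / π ^ 2 * (1 / ((n ^ 2 + x ^ 2) * (n ^ 2 + (z - x) ^ 2))) := fun x => by
    field_simp
  simp_rw [h_integrand]
  rw [integral_const_mul, integral_one_div_mul_sq_add_sq hn]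
  field_simp
end

section
/- In the dyadic simulation tree where the random seed C at each node of level l is produced by a k-wise independent hash function h^l applied to the node index, with a fresh hash function at each level: for every level l, any k of the 2^l range-sums at level l are mutually independent, and in particular the U leaf random variables X_0, ..., X_{U−1} are k-wise independent, each with distribution X. -/
open MeasureTheory ProbabilityTheory

/-!
Induction on the level. The seeds of level `l` are independent of the root and of the seeds of the
earlier levels, which determine the values at level `l`; so for at most `k` nodes of level `l` the
pairs (seed, value) are independent. Each pair determines the two children of its node, and these
are independent of each other by property (I). Independent blocks of independent variables are
jointly independent, and `k` nodes of level `l + 1` have at most `k` parents. The leaves have law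
`X^{*1} = X` by property (I) at the last level.
-/

/-- The `n`-fold convolution power of a distribution `ν` on `ℝ`. -/
noncomputable def convPow (ν : MeasureTheory.Measure ℝ) (n : ℕ) : MeasureTheory.Measure ℝ :=
  MeasureTheory.Measure.map (fun x : Fin n → ℝ => ∑ i, x i)
    (MeasureTheory.Measure.pi fun _ => ν)

lemma convPow_one (ν : Measure ℝ) : convPow ν 1 = ν := by
  have hsum : (fun x : Fin 1 → ℝ => ∑ i, x i) = MeasurableEquiv.funUnique (Fin 1) ℝ := by
    funext x
    simp [MeasurableEquiv.funUnique]
  rw [convPow, hsum]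
  exact (measurePreserving_funUnique ν (Fin 1)).map_eq

namespace ProbabilityTheory

variable {Ω β δ : Type*} {mΩ : MeasurableSpace Ω} {mβ : MeasurableSpace β}
  {mδ : MeasurableSpace δ} {μ : Measure Ω}

lemma indep_sup_left_of_indep_sup_right [IsZeroOrProbabilityMeasure μ]
    {m₁ m₂ m₃ : MeasurableSpace Ω} (h₁ : m₁ ≤ mΩ) (h₂ : m₂ ≤ mΩ) (h₃ : m₃ ≤ mΩ)
    (h₁₂₃ : Indep m₁ (m₂ ⊔ m₃) μ) (h₂₃ : Indep m₂ m₃ μ) :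
    Indep (m₁ ⊔ m₂) m₃ μ := by
  set p := Set.image2 (· ∩ ·) {s | MeasurableSet[m₁] s} {t | MeasurableSet[m₂] t}
  have hp : IsPiSystem p := by
    rintro _ ⟨a, ha, b, hb, rfl⟩ _ ⟨a', ha', b', hb', rfl⟩ _
    refine ⟨a ∩ a', ha.inter ha', b ∩ b', hb.inter hb', ?_⟩
    simp only [Set.inter_inter_inter_comm]
  have hgen : m₁ ⊔ m₂ = MeasurableSpace.generateFrom p := by
    refine le_antisymm (sup_le (fun s hs => ?_) (fun s hs => ?_)) ?_
    · exact MeasurableSpace.measurableSet_generateFrom ⟨s, hs, Set.univ, .univ, Set.inter_univ s⟩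
    · exact MeasurableSpace.measurableSet_generateFrom ⟨Set.univ, .univ, s, hs, Set.univ_inter s⟩
    · refine MeasurableSpace.generateFrom_le ?_
      rintro _ ⟨a, ha, b, hb, rfl⟩
      exact (le_sup_left (a := m₁) _ ha).inter (le_sup_right (a := m₁) _ hb)
  refine IndepSets.indep (sup_le h₁ h₂) h₃ hp MeasurableSpace.isPiSystem_measurableSet hgen
    MeasurableSpace.generateFrom_measurableSet.symm ?_
  rw [IndepSets_iff]
  rintro _ c ⟨a, ha, b, hb, rfl⟩ hc
  have hb' : MeasurableSet[m₂ ⊔ m₃] b := le_sup_left (a := m₂) _ hb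
  have hc' : MeasurableSet[m₂ ⊔ m₃] c := le_sup_right (a := m₂) _ hc
  calc μ (a ∩ b ∩ c) = μ a * μ (b ∩ c) := by
        rw [Set.inter_assoc]; exact (Indep_iff _ _ _).1 h₁₂₃ _ _ ha (hb'.inter hc')
    _ = μ a * μ b * μ c := by rw [(Indep_iff _ _ _).1 h₂₃ _ _ hb hc, mul_assoc]
    _ = μ (a ∩ b) * μ c := by rw [(Indep_iff _ _ _).1 h₁₂₃ _ _ ha hb']

lemma IndepFun.iIndepFun_fin_two [IsProbabilityMeasure μ] {f g : Ω → β}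
    (hf : Measurable f) (hg : Measurable g) (h : IndepFun f g μ) : iIndepFun ![f, g] μ := by
  have hfg : ∀ i, Measurable (![f, g] i) := Fin.forall_fin_two.2 ⟨hf, hg⟩
  rw [iIndepFun_iff_map_fun_eq_pi_map fun i => (hfg i).aemeasurable]
  apply (MeasurableEquiv.piFinTwo fun _ => β).map_measurableEquiv_injective
  rw [(measurePreserving_piFinTwo _).map_eq, Measure.map_map (by fun_prop) (by fun_prop)]
  exact h.map_prod_eq_prod_map_map hf.aemeasurable hg.aemeasurable

lemma iIndepFun.curry {ι κ : Type*} {X : ι → κ → Ω → β} (mX : ∀ i j, Measurable (X i j))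
    (h : iIndepFun (fun p : ι × κ => X p.1 p.2) μ) : iIndepFun (fun i ω j => X i j ω) μ := by
  have := h.isProbabilityMeasure
  have _ i j : IsProbabilityMeasure (μ.map (X i j)) :=
    Measure.isProbabilityMeasure_map (mX i j).aemeasurable
  have hblock i : μ.map (fun ω j => X i j ω) = Measure.infinitePi fun j => μ.map (X i j) :=
    (h.precomp (Prod.mk_right_injective i)).map_fun_eq_infinitePi_map fun j => mX i j
  have hjoint : μ.map (fun ω (p : ι × κ) => X p.1 p.2 ω) =
      Measure.infinitePi fun p : ι × κ => μ.map (X p.1 p.2) :=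
    h.map_fun_eq_infinitePi_map fun p => mX p.1 p.2
  rw [iIndepFun_iff_map_fun_eq_infinitePi_map fun i => measurable_pi_lambda _ (mX i)]
  simp_rw [hblock]
  rw [← Measure.infinitePi_map_curry, ← hjoint, Measure.map_map (by fun_prop) (by fun_prop)]
  rfl

lemma iIndepFun.prodMk_of_indepFun {ι : Type*} {W V : ι → Ω → β}
    (hW : ∀ i, Measurable (W i)) (hV : ∀ i, Measurable (V i))
    (hWi : iIndepFun W μ) (hVi : iIndepFun V μ)
    (hWV : IndepFun (fun ω i => W i ω) (fun ω i => V i ω) μ) :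
    iIndepFun (fun i ω => (W i ω, V i ω)) μ := by
  have := hWi.isProbabilityMeasure
  have hX : ∀ b i, Measurable (![W, V] b i) := Fin.forall_fin_two.2 ⟨hW, hV⟩
  have hblocks : iIndepFun (fun b ω i => ![W, V] b i ω) μ := by
    convert hWV.iIndepFun_fin_two (measurable_pi_lambda _ hW) (measurable_pi_lambda _ hV) using 1
    funext b
    fin_cases b <;> rfl
  have hall := (iIndepFun_uncurry' hX hblocks (Fin.forall_fin_two.2 ⟨hWi, hVi⟩)).precomp
    Prod.swap_injective
  exact (iIndepFun.curry (X := fun i b => ![W, V] b i) (fun i b => hX b i) hall).comp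
    (fun _ v => (v 0, v 1)) fun _ => by fun_prop

lemma iIndepFun.split {ι : Type*} {W V : ι → Ω → β} {g : Fin 2 → β × β → δ}
    (hW : ∀ i, Measurable (W i)) (hV : ∀ i, Measurable (V i)) (hg : ∀ b, Measurable (g b))
    (hWi : iIndepFun W μ) (hVi : iIndepFun V μ)
    (hWV : IndepFun (fun ω i => W i ω) (fun ω i => V i ω) μ)
    (hsplit : ∀ i, IndepFun (g 0 ∘ fun ω => (W i ω, V i ω)) (g 1 ∘ fun ω => (W i ω, V i ω)) μ) :
    iIndepFun (fun q : ι × Fin 2 => g q.2 ∘ fun ω => (W q.1 ω, V q.1 ω)) μ := by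
  have := hWi.isProbabilityMeasure
  have hZ : ∀ i, Measurable fun ω => (W i ω, V i ω) := fun i => (hW i).prodMk (hV i)
  refine iIndepFun_uncurry' (X := fun i b => g b ∘ fun ω => (W i ω, V i ω))
    (fun i b => (hg b).comp (hZ i)) ?_ fun i => ?_
  · exact (iIndepFun.prodMk_of_indepFun hW hV hWi hVi hWV).comp (fun _ z b => g b z)
      fun _ => measurable_pi_lambda _ hg
  · convert (hsplit i).iIndepFun_fin_two ((hg 0).comp (hZ i)) ((hg 1).comp (hZ i)) using 1
    funext b
    fin_cases b <;> rfl

end ProbabilityTheory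

namespace DyadicTree

variable {Ω : Type*} {mΩ : MeasurableSpace Ω} {μ : Measure Ω}

@[reducible] def seedAlgebra (C : ℕ → ℕ → Ω → ℝ) (l : ℕ) : MeasurableSpace Ω :=
  MeasurableSpace.comap (fun ω i => C l i ω) inferInstance

@[reducible] def pastAlgebra (S C : ℕ → ℕ → Ω → ℝ) (l : ℕ) : MeasurableSpace Ω :=
  MeasurableSpace.comap (S 0 0) inferInstance ⊔ ⨆ l' ∈ Set.Iio l, seedAlgebra C l'

/-- A node of value `s` split with seed `c` has children `φ c s` and `s - φ c s`. -/
def childMap (φ : ℝ → ℝ → ℝ) : Fin 2 → ℝ × ℝ → ℝ :=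
  ![fun x => φ x.1 x.2, fun x => x.2 - φ x.1 x.2]

lemma measurable_childMap {φ : ℝ → ℝ → ℝ} (hφ : Measurable (Function.uncurry φ)) (b : Fin 2) :
    Measurable (childMap φ b) := by
  fin_cases b
  · exact hφ
  · exact measurable_snd.sub hφ

lemma measurable_seedAlgebra (C : ℕ → ℕ → Ω → ℝ) (l i : ℕ) :
    Measurable[seedAlgebra C l] (C l i) :=
  fun _ hs => ⟨_, measurable_pi_apply i hs, rfl⟩

lemma seedAlgebra_le {C : ℕ → ℕ → Ω → ℝ} (hC : ∀ l i, Measurable (C l i)) (l : ℕ) :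
    seedAlgebra C l ≤ mΩ :=
  (measurable_pi_lambda _ (hC l)).comap_le

variable {S C : ℕ → ℕ → Ω → ℝ} {θ : ℕ → ℝ → ℝ → ℝ} {m : ℕ}

lemma child_eq_childMap
    (hsplitL : ∀ l i, l < m → i < 2 ^ l →
      S (l + 1) (2 * i) = fun ω => θ l (C l i ω) (S l i ω))
    (hsplitR : ∀ l i, l < m → i < 2 ^ l →
      S (l + 1) (2 * i + 1) = S l i - S (l + 1) (2 * i))
    {l p : ℕ} (hl : l < m) (hp : p < 2 ^ l) (b : Fin 2) :
    S (l + 1) (2 * p + b) = childMap (θ l) b ∘ fun ω => (C l p ω, S l p ω) := by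
  fin_cases b
  · simpa [childMap, Function.comp_def] using hsplitL l p hl hp
  · simp only [Fin.mk_one, hsplitR l p hl hp, hsplitL l p hl hp]
    rfl

lemma measurable_pastAlgebra (hθ : ∀ l, Measurable (Function.uncurry (θ l)))
    (hsplitL : ∀ l i, l < m → i < 2 ^ l →
      S (l + 1) (2 * i) = fun ω => θ l (C l i ω) (S l i ω))
    (hsplitR : ∀ l i, l < m → i < 2 ^ l →
      S (l + 1) (2 * i + 1) = S l i - S (l + 1) (2 * i)) :
    ∀ l ≤ m, ∀ i < 2 ^ l, Measurable[pastAlgebra S C l] (S l i) := by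
  intro l
  induction l with
  | zero =>
    intro _ i hi
    obtain rfl : i = 0 := by omega
    exact (comap_measurable (S 0 0)).mono le_sup_left le_rfl
  | succ l ih =>
    intro hl i hi
    have hpast : pastAlgebra S C l ≤ pastAlgebra S C (l + 1) :=
      sup_le_sup_left (biSup_mono fun l' (hl' : l' < l) => Nat.lt_succ_of_lt hl') _
    have hseed : seedAlgebra C l ≤ pastAlgebra S C (l + 1) :=
      le_sup_of_le_right (le_biSup (f := seedAlgebra C) (Set.mem_Iio.2 (Nat.lt_succ_self l)))
    obtain ⟨p, hp, b, rfl⟩ : ∃ p < 2 ^ l, ∃ b : Fin 2, i = 2 * p + b := by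
      rw [pow_succ] at hi
      exact ⟨i / 2, by omega, ⟨i % 2, Nat.mod_lt _ two_pos⟩, (Nat.div_add_mod i 2).symm⟩
    rw [child_eq_childMap hsplitL hsplitR hl hp b]
    exact (measurable_childMap (hθ l) b).comp
      (((measurable_seedAlgebra C l p).mono hseed le_rfl).prodMk
        ((ih (Nat.le_of_succ_le hl) p hp).mono hpast le_rfl))

lemma indep_pastAlgebra_seedAlgebra [IsProbabilityMeasure μ] (hS : Measurable (S 0 0))
    (hC : ∀ l i, Measurable (C l i))
    (hlevels : iIndepFun (fun l : ℕ => fun ω (i : ℕ) => C l i ω) μ)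
    (hrootindep : IndepFun (S 0 0) (fun ω (p : ℕ × ℕ) => C p.1 p.2 ω) μ) (l : ℕ) :
    Indep (pastAlgebra S C l) (seedAlgebra C l) μ := by
  have hseeds_le : ∀ l', seedAlgebra C l' ≤
      MeasurableSpace.comap (fun ω (p : ℕ × ℕ) => C p.1 p.2 ω) inferInstance :=
    fun l' _ ⟨t, ht, hs⟩ =>
      ⟨(fun g i => g (l', i)) ⁻¹' t, measurable_pi_lambda _ (fun i => measurable_pi_apply _) ht, hs⟩
  have hpast_seed : Indep (⨆ l' ∈ Set.Iio l, seedAlgebra C l') (seedAlgebra C l) μ := by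
    simpa using indep_iSup_of_disjoint (seedAlgebra_le hC) ((iIndepFun_iff_iIndep _ _ _).1 hlevels)
      (S := Set.Iio l) (T := {l}) (by simp)
  refine indep_sup_left_of_indep_sup_right hS.comap_le (iSup₂_le fun l' _ => seedAlgebra_le hC l')
    (seedAlgebra_le hC l) ?_ hpast_seed
  exact indep_of_indep_of_le_right ((IndepFun_iff_Indep _ _ _).1 hrootindep)
    (sup_le (iSup₂_le fun l' _ => hseeds_le l') (hseeds_le l))

lemma iIndepFun_children [IsProbabilityMeasure μ] {l : ℕ} (hl : l < m)
    (hS : ∀ l i, Measurable (S l i)) (hC : ∀ l i, Measurable (C l i))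
    (hθ : ∀ l, Measurable (Function.uncurry (θ l)))
    (hsplitL : ∀ l i, l < m → i < 2 ^ l →
      S (l + 1) (2 * i) = fun ω => θ l (C l i ω) (S l i ω))
    (hsplitR : ∀ l i, l < m → i < 2 ^ l →
      S (l + 1) (2 * i + 1) = S l i - S (l + 1) (2 * i))
    (hindep : Indep (pastAlgebra S C l) (seedAlgebra C l) μ)
    (hSpast : ∀ i < 2 ^ l, Measurable[pastAlgebra S C l] (S l i))
    (hsiblings : ∀ i < 2 ^ l, IndepFun (S (l + 1) (2 * i)) (S (l + 1) (2 * i + 1)) μ)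
    {P : Finset ℕ} (hP : ∀ p ∈ P, p < 2 ^ l)
    (hCP : iIndepFun (fun p : P => C l p) μ) (hSP : iIndepFun (fun p : P => S l p) μ) :
    iIndepFun (fun q : P × Fin 2 => S (l + 1) (2 * q.1 + q.2)) μ := by
  have hseeds_parents : IndepFun (fun ω (p : P) => C l p ω) (fun ω (p : P) => S l p ω) μ := by
    rw [IndepFun_iff_Indep]
    have hseeds : Measurable[seedAlgebra C l] fun ω (p : P) => C l p ω := by
      let := seedAlgebra C l
      exact measurable_pi_lambda _ fun p => measurable_seedAlgebra C l p
    have hparents : Measurable[pastAlgebra S C l] fun ω (p : P) => S l p ω := by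
      let := pastAlgebra S C l
      exact measurable_pi_lambda _ fun p => hSpast p (hP p p.2)
    exact indep_of_indep_of_le hindep.symm hseeds.comap_le hparents.comap_le
  have hsplit := iIndepFun.split (W := fun p : P => C l p) (V := fun p : P => S l p)
    (fun p => hC l p) (fun p => hS l p)
    (measurable_childMap (hθ l)) hCP hSP hseeds_parents fun p => by
      simpa only [← child_eq_childMap hsplitL hsplitR hl (hP p p.2), Fin.val_zero,
        Fin.val_one, add_zero] using hsiblings p (hP p p.2)
  convert hsplit using 1
  funext q
  exact child_eq_childMap hsplitL hsplitR hl (hP q.1 q.1.2) q.2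

lemma iIndepFun_level_of_card_le [IsProbabilityMeasure μ] {k : ℕ}
    (hS : ∀ l i, Measurable (S l i)) (hC : ∀ l i, Measurable (C l i))
    (hθ : ∀ l, Measurable (Function.uncurry (θ l)))
    (hkwise : ∀ l (J : Finset ℕ), J.card ≤ k → iIndepFun (fun j : J => C l j.1) μ)
    (hlevels : iIndepFun (fun l : ℕ => fun ω (i : ℕ) => C l i ω) μ)
    (hrootindep : IndepFun (S 0 0) (fun ω (p : ℕ × ℕ) => C p.1 p.2 ω) μ)
    (hsplitL : ∀ l i, l < m → i < 2 ^ l →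
      S (l + 1) (2 * i) = fun ω => θ l (C l i ω) (S l i ω))
    (hsplitR : ∀ l i, l < m → i < 2 ^ l →
      S (l + 1) (2 * i + 1) = S l i - S (l + 1) (2 * i))
    (hsiblings : ∀ l i, l < m → i < 2 ^ l →
      IndepFun (S (l + 1) (2 * i)) (S (l + 1) (2 * i + 1)) μ) :
    ∀ l ≤ m, ∀ J : Finset ℕ, (∀ j ∈ J, j < 2 ^ l) → J.card ≤ k →
      iIndepFun (fun j : J => S l j.1) μ := by
  intro l
  induction l with
  | zero =>
    intro _ J hJ _
    have : Subsingleton J :=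
      ⟨fun a b => Subtype.ext (by have := hJ a a.2; have := hJ b b.2; omega)⟩
    exact iIndepFun.of_subsingleton
  | succ l ih =>
    intro hl J hJ hk
    set P := J.image (· / 2)
    have hP : ∀ p ∈ P, p < 2 ^ l := by
      simp only [P, Finset.mem_image, forall_exists_index, and_imp]
      rintro _ j hj rfl
      have := hJ j hj
      rw [pow_succ] at this
      omega
    have hchildren := iIndepFun_children hl hS hC hθ hsplitL hsplitR
      (indep_pastAlgebra_seedAlgebra (hS 0 0) hC hlevels hrootindep l)
      (measurable_pastAlgebra hθ hsplitL hsplitR l (Nat.le_of_succ_le hl))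
      (fun i hi => hsiblings l i hl hi) hP (hkwise l P (Finset.card_image_le.trans hk))
      (ih (Nat.le_of_succ_le hl) P hP (Finset.card_image_le.trans hk))
    let e : J → P × Fin 2 := fun j =>
      (⟨j / 2, Finset.mem_image_of_mem _ j.2⟩, ⟨j % 2, Nat.mod_lt _ two_pos⟩)
    have he : Function.Injective e := fun a b hab => by
      simp only [e, Prod.mk.injEq, Subtype.mk.injEq, Fin.mk.injEq] at hab
      exact Subtype.ext (by rw [← Nat.div_add_mod a 2, ← Nat.div_add_mod b 2, hab.1, hab.2])
    convert hchildren.precomp he using 1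
    funext j
    simp only [e, Nat.div_add_mod]

lemma map_leaf_eq {ν : Measure ℝ} (hm : 0 < m)
    (hlaw : ∀ l i, l < m → i < 2 ^ l →
      Measure.map (S (l + 1) (2 * i)) μ = convPow ν (2 ^ (m - (l + 1))) ∧
      Measure.map (S (l + 1) (2 * i + 1)) μ = convPow ν (2 ^ (m - (l + 1))))
    {i : ℕ} (hi : i < 2 ^ m) : Measure.map (S m i) μ = ν := by
  obtain ⟨l, rfl⟩ : ∃ l, m = l + 1 := ⟨m - 1, by omega⟩
  obtain ⟨p, rfl | rfl⟩ := Nat.even_or_odd' i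
  · simpa [convPow_one] using (hlaw l p (Nat.lt_succ_self l) (by rw [pow_succ] at hi; omega)).1
  · simpa [convPow_one] using (hlaw l p (Nat.lt_succ_self l) (by rw [pow_succ] at hi; omega)).2

end DyadicTree

theorem stmt_15_general
    (Ω : Type*) [MeasureSpace Ω] [IsProbabilityMeasure (ℙ : Measure Ω)]
    (ν : Measure ℝ)
    (m k : ℕ) (hm : 0 < m)
    (S : ℕ → ℕ → Ω → ℝ) (C : ℕ → ℕ → Ω → ℝ)
    (θ : ℕ → ℝ → ℝ → ℝ)
    (hSmeas : ∀ l i, Measurable (S l i)) (hCmeas : ∀ l i, Measurable (C l i))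
    (hθmeas : ∀ l, Measurable (Function.uncurry (θ l)))
    -- within each level, the seeds (hash values of a k-wise independent hash) are
    -- k-wise independent
    (hkwise : ∀ l (J : Finset ℕ), J.card ≤ k →
      iIndepFun (fun j : J => C l j.1) ℙ)
    -- the per-level hash functions are independent across levels
    (hlevels : iIndepFun
      (fun l : ℕ => fun ω (i : ℕ) => C l i ω) ℙ)
    -- and the seeds are independent of the root
    (hrootindep : IndepFun (S 0 0) (fun ω (p : ℕ × ℕ) => C p.1 p.2 ω) ℙ)
    -- each left child is a deterministic function of the parent's value and the seed
    (hsplitL : ∀ l i, l < m → i < 2 ^ l →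
      S (l + 1) (2 * i) = fun ω => θ l (C l i ω) (S l i ω))
    -- the parent is the sum of its two children
    (hsplitR : ∀ l i, l < m → i < 2 ^ l →
      S (l + 1) (2 * i + 1) = S l i - S (l + 1) (2 * i))
    -- property (I): the two children of each node are i.i.d. with distribution
    -- X^{*(U/2^{l+1})}
    (hI : ∀ l i, l < m → i < 2 ^ l →
      IndepFun (S (l + 1) (2 * i)) (S (l + 1) (2 * i + 1)) ℙ ∧
      Measure.map (S (l + 1) (2 * i)) ℙ = convPow ν (2 ^ (m - (l + 1))) ∧
      Measure.map (S (l + 1) (2 * i + 1)) ℙ = convPow ν (2 ^ (m - (l + 1)))) :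
    (∀ l, l ≤ m → ∀ J : Finset ℕ, (∀ j ∈ J, j < 2 ^ l) → J.card ≤ k →
      iIndepFun (fun j : J => S l j.1) ℙ) ∧
    (∀ i, i < 2 ^ m → Measure.map (S m i) ℙ = ν) :=
  ⟨DyadicTree.iIndepFun_level_of_card_le hSmeas hCmeas hθmeas hkwise hlevels hrootindep
      hsplitL hsplitR fun l i hl hi => (hI l i hl hi).1,
    fun _ hi => DyadicTree.map_leaf_eq hm (fun l i hl hi => (hI l i hl hi).2) hi⟩

/-- In the dyadic simulation tree (root distributed `X^{*U}`, `U = 2^m`), the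
seed at node `i` of level `l` is `C l i = h^l(i)` where the per-level hash functions are
`k`-wise independent and fresh (independent across levels and of the root). Each node is split
into two children determined by the parent's value and the seed, the parent being their sum,
and the split satisfying property (I) (children i.i.d. with the appropriate convolution-power
law). Then for every level `l`, any `k` of the `2^l` range-sums at level `l` are mutually
independent; in particular the `U` leaves `X_0, ..., X_{U-1}` are `k`-wise independent, each
with distribution `X`. -/
theorem stmt_15
    (Ω : Type*) [MeasureSpace Ω] [IsProbabilityMeasure (ℙ : Measure Ω)]
    (ν : Measure ℝ) [IsProbabilityMeasure ν]
    (m k : ℕ) (hm : 0 < m) (hk : 2 ≤ k)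
    (S : ℕ → ℕ → Ω → ℝ) (C : ℕ → ℕ → Ω → ℝ)
    (θ : ℕ → ℝ → ℝ → ℝ)
    (hSmeas : ∀ l i, Measurable (S l i)) (hCmeas : ∀ l i, Measurable (C l i))
    (hθmeas : ∀ l, Measurable (Function.uncurry (θ l)))
    -- the root has distribution X^{*U}
    (hroot : Measure.map (S 0 0) ℙ = convPow ν (2 ^ m))
    -- within each level, the seeds (hash values of a k-wise independent hash) are
    -- k-wise independent
    (hkwise : ∀ l (J : Finset ℕ), J.card ≤ k →
      iIndepFun (fun j : J => C l j.1) ℙ)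
    -- the per-level hash functions are independent across levels
    (hlevels : iIndepFun
      (fun l : ℕ => fun ω (i : ℕ) => C l i ω) ℙ)
    -- and the seeds are independent of the root
    (hrootindep : IndepFun (S 0 0) (fun ω (p : ℕ × ℕ) => C p.1 p.2 ω) ℙ)
    -- each left child is a deterministic function of the parent's value and the seed
    (hsplitL : ∀ l i, l < m → i < 2 ^ l →
      S (l + 1) (2 * i) = fun ω => θ l (C l i ω) (S l i ω))
    -- the parent is the sum of its two children
    (hsplitR : ∀ l i, l < m → i < 2 ^ l →
      S (l + 1) (2 * i + 1) = S l i - S (l + 1) (2 * i))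
    -- property (I): the two children of each node are i.i.d. with distribution
    -- X^{*(U/2^{l+1})}
    (hI : ∀ l i, l < m → i < 2 ^ l →
      IndepFun (S (l + 1) (2 * i)) (S (l + 1) (2 * i + 1)) ℙ ∧
      Measure.map (S (l + 1) (2 * i)) ℙ = convPow ν (2 ^ (m - (l + 1))) ∧
      Measure.map (S (l + 1) (2 * i + 1)) ℙ = convPow ν (2 ^ (m - (l + 1)))) :
    (∀ l, l ≤ m → ∀ J : Finset ℕ, (∀ j ∈ J, j < 2 ^ l) → J.card ≤ k →
      iIndepFun (fun j : J => S l j.1) ℙ) ∧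
    (∀ i, i < 2 ^ m → Measure.map (S m i) ℙ = ν) :=
  stmt_15_general Ω ν m k hm S C θ hSmeas hCmeas hθmeas hkwise hlevels hrootindep hsplitL hsplitR hI
end

section
/- In the dyadic simulation tree built with 2-wise independent hash functions at every level, for any 0 ≤ a ≤ b < U the range-sum S[a,b) = X_a + X_{a+1} + ... + X_{b−1} has marginal distribution exactly X^{*(b−a)}. -/
open MeasureTheory ProbabilityTheory

/-! Descend from the root to the lowest node whose subtree contains `[a, b)`. If the range lies
in one child, recurse. Otherwise it splits at the midpoint into a suffix `X` of the left child's
leaves and a prefix `Y` of the right child's leaves. Unfolding the splits, `X` is a function of the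
left child's value and of the seeds on the path down to leaf `a`, and `Y` one of the right child's
value and of the seeds on the path down to leaf `b`. The two children are independent by (I); below
them the two paths pass through different nodes of every level, whose seeds are independent by
2-wise independence; and the seeds of a level are independent of everything generated above it.
Hence `X` and `Y` are independent, so the law of `X + Y` is the convolution of the laws of `X` and
`Y` given by induction. -/

namespace MeasureTheory

variable {α β γ δ : Type*} [MeasurableSpace α] [MeasurableSpace β] [MeasurableSpace γ]
  [MeasurableSpace δ]

lemma measurePreserving_prodProdProdComm (μa : Measure α) (μb : Measure β) (μc : Measure γ)
    (μd : Measure δ) [SFinite μa] [SFinite μb] [SFinite μc] [SFinite μd] :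
    MeasurePreserving (Equiv.prodProdProdComm α β γ δ)
      ((μa.prod μb).prod (μc.prod μd)) ((μa.prod μc).prod (μb.prod μd)) := by
  have hmiddle : MeasurePreserving (fun q : β × γ × δ => (q.2.1, (q.1, q.2.2)))
      (μb.prod (μc.prod μd)) (μc.prod (μb.prod μd)) :=
    (measurePreserving_prodAssoc μc μb μd).comp
      ((Measure.measurePreserving_swap.prod (.id μd)).comp
        ((measurePreserving_prodAssoc μb μc μd).symm MeasurableEquiv.prodAssoc))
  exact ((measurePreserving_prodAssoc μa μc (μb.prod μd)).symm MeasurableEquiv.prodAssoc).comp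
    (((MeasurePreserving.id μa).prod hmiddle).comp (measurePreserving_prodAssoc μa μb _))

end MeasureTheory

namespace ProbabilityTheory

variable {Ω α β γ δ : Type*} [MeasurableSpace Ω] [MeasurableSpace α] [MeasurableSpace β]
  [MeasurableSpace γ] [MeasurableSpace δ] {μ : Measure Ω}

lemma IndepFun.of_measurable_comap {X : Ω → α} {Y : Ω → β} {X' : Ω → γ} {Y' : Ω → δ}
    (h : IndepFun X Y μ) (hX' : Measurable[.comap X inferInstance] X')
    (hY' : Measurable[.comap Y inferInstance] Y') : IndepFun X' Y' μ :=
  indep_of_indep_of_le h hX'.comap_le hY'.comap_le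

lemma indepFun_of_forall_card_le_two {ι : Type*} {X : ι → Ω → α}
    (h : ∀ J : Finset ι, J.card ≤ 2 → iIndepFun (fun j : J => X j.1) μ) {i j : ι} (hij : i ≠ j) :
    IndepFun (X i) (X j) μ := by
  classical
  exact (h {i, j} (Finset.card_le_two)).indepFun (i := ⟨i, by simp⟩) (j := ⟨j, by simp⟩)
    (by simpa using hij)

variable [IsFiniteMeasure μ]

lemma IndepFun.prodMk_left_of_prodMk_right {X : Ω → α} {Y : Ω → β} {Z : Ω → γ}
    (hX : Measurable X) (hY : Measurable Y) (hZ : Measurable Z)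
    (hXYZ : IndepFun X (fun ω => (Y ω, Z ω)) μ) (hYZ : IndepFun Y Z μ) :
    IndepFun (fun ω => (X ω, Y ω)) Z μ := by
  have hXY : IndepFun X Y μ := hXYZ.comp measurable_id measurable_fst
  rw [indepFun_iff_map_prod_eq_prod_map_map (hX.prodMk hY).aemeasurable hZ.aemeasurable]
  have hreassoc : (fun ω => ((X ω, Y ω), Z ω))
      = MeasurableEquiv.prodAssoc.symm ∘ fun ω => (X ω, (Y ω, Z ω)) := rfl
  rw [hreassoc, ← Measure.map_map MeasurableEquiv.prodAssoc.symm.measurable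
      (hX.prodMk (hY.prodMk hZ)),
    hXYZ.map_prod_eq_prod_map_map hX.aemeasurable (hY.prodMk hZ).aemeasurable,
    hYZ.map_prod_eq_prod_map_map hY.aemeasurable hZ.aemeasurable,
    hXY.map_prod_eq_prod_map_map hX.aemeasurable hY.aemeasurable]
  exact ((measurePreserving_prodAssoc (μ.map X) (μ.map Y) (μ.map Z)).symm
    MeasurableEquiv.prodAssoc).map_eq

lemma IndepFun.prodProdProdComm {X : Ω → α} {Y : Ω → β} {U : Ω → γ} {V : Ω → δ}
    (hX : Measurable X) (hY : Measurable Y) (hU : Measurable U) (hV : Measurable V)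
    (hXYUV : IndepFun (fun ω => (X ω, Y ω)) (fun ω => (U ω, V ω)) μ)
    (hXY : IndepFun X Y μ) (hUV : IndepFun U V μ) :
    IndepFun (fun ω => (X ω, U ω)) (fun ω => (Y ω, V ω)) μ := by
  have hXU : IndepFun X U μ := hXYUV.comp measurable_fst measurable_fst
  have hYV : IndepFun Y V μ := hXYUV.comp measurable_snd measurable_snd
  have hshuffle := measurePreserving_prodProdProdComm (μ.map X) (μ.map Y) (μ.map U) (μ.map V)
  rw [indepFun_iff_map_prod_eq_prod_map_map (hX.prodMk hU).aemeasurable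
    (hY.prodMk hV).aemeasurable]
  rw [show (fun ω => ((X ω, U ω), (Y ω, V ω)))
      = Equiv.prodProdProdComm α β γ δ ∘ fun ω => ((X ω, Y ω), (U ω, V ω)) from rfl,
    ← Measure.map_map hshuffle.measurable ((hX.prodMk hY).prodMk (hU.prodMk hV)),
    hXYUV.map_prod_eq_prod_map_map (hX.prodMk hY).aemeasurable (hU.prodMk hV).aemeasurable,
    hXY.map_prod_eq_prod_map_map hX.aemeasurable hY.aemeasurable,
    hUV.map_prod_eq_prod_map_map hU.aemeasurable hV.aemeasurable, hshuffle.map_eq,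
    hXU.map_prod_eq_prod_map_map hX.aemeasurable hU.aemeasurable,
    hYV.map_prod_eq_prod_map_map hY.aemeasurable hV.aemeasurable]

end ProbabilityTheory

section ConvPow

variable (ν : Measure ℝ)

lemma convPow_zero : convPow ν 0 = Measure.dirac 0 := by
  simp [convPow, Measure.map_const]

variable [IsFiniteMeasure ν]

instance (n : ℕ) : IsFiniteMeasure (convPow ν n) := by
  unfold convPow; infer_instance

lemma convPow_add (p q : ℕ) : convPow ν p ∗ convPow ν q = convPow ν (p + q) := by
  have happend : MeasurePreserving
      ((MeasurableEquiv.piCongrLeft (fun _ => ℝ) finSumFinEquiv) ∘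
        (MeasurableEquiv.sumPiEquivProdPi (fun _ : Fin p ⊕ Fin q => ℝ)).symm)
      ((Measure.pi fun _ => ν).prod (Measure.pi fun _ => ν)) (Measure.pi fun _ => ν) :=
    (measurePreserving_piCongrLeft _ _).comp
      (measurePreserving_sumPiEquivProdPi_symm fun _ : Fin p ⊕ Fin q => ν)
  have hsum : (fun x : Fin (p + q) → ℝ => ∑ i, x i) ∘
        ((MeasurableEquiv.piCongrLeft (fun _ => ℝ) finSumFinEquiv) ∘
          (MeasurableEquiv.sumPiEquivProdPi (fun _ : Fin p ⊕ Fin q => ℝ)).symm)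
      = (fun x : ℝ × ℝ => x.1 + x.2) ∘ Prod.map (fun x : Fin p → ℝ => ∑ i, x i)
          (fun x : Fin q → ℝ => ∑ i, x i) := by
    funext x
    simp only [Function.comp_apply, Fin.sum_univ_add, ← finSumFinEquiv_apply_left,
      ← finSumFinEquiv_apply_right, MeasurableEquiv.piCongrLeft_apply_apply]
    rfl
  calc convPow ν p ∗ convPow ν q
      = ((Measure.pi fun _ => ν).prod (Measure.pi fun _ => ν)).map
          ((fun x : ℝ × ℝ => x.1 + x.2) ∘ Prod.map (fun x : Fin p → ℝ => ∑ i, x i)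
            (fun x : Fin q → ℝ => ∑ i, x i)) := by
        rw [← Measure.map_map (by fun_prop) (by fun_prop),
          ← Measure.map_prod_map _ _ (by fun_prop) (by fun_prop)]
        rfl
    _ = convPow ν (p + q) := by
        rw [← hsum, ← Measure.map_map (by fun_prop) happend.measurable, happend.map_eq]
        rfl

lemma ProbabilityTheory.IndepFun.map_add_eq_convPow {Ω : Type*} [MeasurableSpace Ω]
    {μ : Measure Ω} [IsFiniteMeasure μ] {X Y : Ω → ℝ} (hXY : IndepFun X Y μ)
    (hX : Measurable X) (hY : Measurable Y) {p q : ℕ} (hXp : μ.map X = convPow ν p)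
    (hYq : μ.map Y = convPow ν q) :
    μ.map (fun ω => X ω + Y ω) = convPow ν (p + q) := by
  rw [← convPow_add, ← hXp, ← hYq]
  exact hXY.map_add_eq_map_conv_map hX hY

end ConvPow

section DyadicTree

variable {Ω : Type*} {m : ℕ} {S C : ℕ → ℕ → Ω → ℝ} {θ : ℕ → ℝ → ℝ → ℝ}

structure IsSplitTree (m : ℕ) (S C : ℕ → ℕ → Ω → ℝ) (θ : ℕ → ℝ → ℝ → ℝ) : Prop where
  left : ∀ l i, l < m → i < 2 ^ l → S (l + 1) (2 * i) = fun ω => θ l (C l i ω) (S l i ω)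
  right : ∀ l i, l < m → i < 2 ^ l → S (l + 1) (2 * i + 1) = S l i - S (l + 1) (2 * i)

lemma node_eq_sum_leaves
    (hright : ∀ l i, l < m → i < 2 ^ l → S (l + 1) (2 * i + 1) = S l i - S (l + 1) (2 * i))
    {d l i : ℕ} (hl : l + d = m) (hi : i < 2 ^ l) (ω : Ω) :
    S l i ω = ∑ j ∈ Finset.Ico (i * 2 ^ d) ((i + 1) * 2 ^ d), S m j ω := by
  induction d generalizing l i with
  | zero => obtain rfl : l = m := hl; simp
  | succ d ih =>
    have hsplit := congrFun (hright l i (by omega) hi) ω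
    have hpow : 0 < 2 ^ d := by positivity
    rw [show i * 2 ^ (d + 1) = 2 * i * 2 ^ d by ring,
      show (i + 1) * 2 ^ (d + 1) = (2 * i + 1 + 1) * 2 ^ d by ring,
      ← Finset.sum_Ico_consecutive _ (n := (2 * i + 1) * 2 ^ d) (by nlinarith) (by nlinarith),
      ← ih (l := l + 1) (by omega) (by rw [pow_succ]; omega),
      ← ih (l := l + 1) (by omega) (by rw [pow_succ]; omega)]
    simp only [Pi.sub_apply] at hsplit
    linarith

def rootAndSeedsBelow (S C : ℕ → ℕ → Ω → ℝ) (n : ℕ) (ω : Ω) : ℝ × (ℕ → ℕ → ℝ) :=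
  (S 0 0 ω, fun k j => if k < n then C k j ω else 0)

/-- The ancestor of leaf `a` at level `k` is node `a / 2 ^ (m - k)`. -/
def pathSeeds (C : ℕ → ℕ → Ω → ℝ) (m a l n : ℕ) (ω : Ω) : ℕ → ℝ :=
  fun k => if l ≤ k ∧ k < n then C k (a / 2 ^ (m - k)) ω else 0

lemma pathSeeds_self {a l n : ℕ} (hln : l < n) (ω : Ω) :
    pathSeeds C m a l n ω l = C l (a / 2 ^ (m - l)) ω := by
  simp [pathSeeds, hln]

lemma pathSeeds_succ_left {a l n : ℕ} (ω : Ω) :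
    pathSeeds C m a (l + 1) n ω = Function.update (pathSeeds C m a l n ω) l 0 := by
  funext k
  by_cases hk : k = l
  · subst hk; simp [pathSeeds]
  · have hlevel : l + 1 ≤ k ∧ k < n ↔ l ≤ k ∧ k < n := by omega
    simp only [pathSeeds, Function.update_of_ne hk, hlevel]

lemma pathSeeds_succ_right {a l n : ℕ} (hln : l ≤ n) (ω : Ω) :
    pathSeeds C m a l (n + 1) ω
      = Function.update (pathSeeds C m a l n ω) n (C n (a / 2 ^ (m - n)) ω) := by
  funext k
  by_cases hk : k = n
  · subst hk; simp [pathSeeds, hln]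
  · have hlevel : l ≤ k ∧ k < n + 1 ↔ l ≤ k ∧ k < n := by omega
    simp only [pathSeeds, Function.update_of_ne hk, hlevel]

lemma pathSeeds_self_right {a l : ℕ} (ω : Ω) : pathSeeds C m a l l ω = 0 := by
  funext k
  simp only [pathSeeds, Pi.zero_apply]
  rw [if_neg (by omega)]

lemma measurable_pathSeeds [MeasurableSpace Ω] (hC : ∀ k j, Measurable (C k j)) (m a l n : ℕ) :
    Measurable (pathSeeds C m a l n) := by
  refine measurable_pi_lambda _ fun k => ?_
  by_cases hk : l ≤ k ∧ k < n <;> simp [pathSeeds, hk, hC]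

lemma measurable_comap_rootAndSeedsBelow_pathSeeds {a l n n' : ℕ} (hn : n ≤ n') :
    Measurable[.comap (rootAndSeedsBelow S C n') inferInstance] (pathSeeds C m a l n) := by
  have hfactor : pathSeeds C m a l n = (fun p : ℝ × (ℕ → ℕ → ℝ) => fun k =>
      if l ≤ k ∧ k < n then p.2 k (a / 2 ^ (m - k)) else 0) ∘ rootAndSeedsBelow S C n' := by
    funext ω k
    by_cases hk : l ≤ k ∧ k < n
    · simp [pathSeeds, rootAndSeedsBelow, hk, show k < n' by omega]
    · simp [pathSeeds, hk]
  rw [hfactor]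
  refine Measurable.comp (measurable_pi_lambda _ fun k => ?_) (comap_measurable _)
  by_cases hk : l ≤ k ∧ k < n
  · simp only [hk, and_self, if_true]; fun_prop
  · simp [hk]

lemma IsSplitTree.measurable_comap_rootAndSeedsBelow (hT : IsSplitTree m S C θ)
    (hθ : ∀ l, Measurable (Function.uncurry (θ l))) {n l i : ℕ} (hln : l ≤ n) (hlm : l ≤ m)
    (hi : i < 2 ^ l) :
    Measurable[.comap (rootAndSeedsBelow S C n) inferInstance] (S l i) := by
  induction l generalizing i with
  | zero =>
    obtain rfl : i = 0 := by simpa using hi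
    exact measurable_fst.comp (comap_measurable _)
  | succ l ih =>
    have hj : i / 2 < 2 ^ l := by rw [pow_succ] at hi; omega
    have hparent := ih (by omega) (by omega) hj
    have hseed : Measurable[.comap (rootAndSeedsBelow S C n) inferInstance] (C l (i / 2)) := by
      have hfactor : C l (i / 2)
          = (fun p : ℝ × (ℕ → ℕ → ℝ) => p.2 l (i / 2)) ∘ rootAndSeedsBelow S C n := by
        funext ω
        simp [rootAndSeedsBelow, show l < n by omega]
      rw [hfactor]
      exact (by fun_prop : Measurable fun p : ℝ × (ℕ → ℕ → ℝ) => p.2 l (i / 2)).comp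
        (comap_measurable _)
    have hleft : Measurable[.comap (rootAndSeedsBelow S C n) inferInstance]
        (S (l + 1) (2 * (i / 2))) := by
      rw [hT.left l (i / 2) (by omega) hj]
      exact (hθ l).comp (hseed.prodMk hparent)
    rcases Nat.mod_two_eq_zero_or_one i with h | h
    · rwa [show i = 2 * (i / 2) by omega]
    · rw [show i = 2 * (i / 2) + 1 by omega, hT.right l (i / 2) (by omega) hj]
      exact hparent.sub hleft

lemma IsSplitTree.comap_child_le (hT : IsSplitTree m S C θ)
    (hθ : ∀ l, Measurable (Function.uncurry (θ l))) {d l i a c : ℕ} (hl : l + (d + 1) = m)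
    (hi : i < 2 ^ l) (ha : i * 2 ^ (d + 1) ≤ a) (ha' : a < (i + 1) * 2 ^ (d + 1))
    (hc : c / 2 = i) :
    MeasurableSpace.comap (fun ω => (S (l + 1) c ω, pathSeeds C m a (l + 1) m ω)) inferInstance
      ≤ MeasurableSpace.comap (fun ω => (S l i ω, pathSeeds C m a l m ω)) inferInstance := by
  set Z := fun ω => (S l i ω, pathSeeds C m a l m ω)
  have hlm : l < m := by omega
  have hparent : Measurable[.comap Z inferInstance] (S l i) :=
    measurable_fst.comp (comap_measurable Z)
  have hpath : Measurable[.comap Z inferInstance] (pathSeeds C m a l m) :=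
    measurable_snd.comp (comap_measurable Z)
  have hseed : Measurable[.comap Z inferInstance] (C l i) := by
    have hCi : C l i = fun ω => pathSeeds C m a l m ω l := by
      funext ω
      rw [pathSeeds_self hlm, show m - l = d + 1 by omega, Nat.div_eq_of_lt_le ha ha']
    rw [hCi]
    exact (measurable_pi_apply l).comp hpath
  have hleft : Measurable[.comap Z inferInstance] (S (l + 1) (2 * i)) := by
    rw [hT.left l i hlm hi]
    exact (hθ l).comp (hseed.prodMk hparent)
  have hchild : Measurable[.comap Z inferInstance] (S (l + 1) c) := by
    rcases Nat.mod_two_eq_zero_or_one c with h | h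
    · rwa [show c = 2 * i by omega]
    · rw [show c = 2 * i + 1 by omega, hT.right l i hlm hi]
      exact hparent.sub hleft
  have hchildPath : Measurable[.comap Z inferInstance] (pathSeeds C m a (l + 1) m) := by
    rw [show pathSeeds C m a (l + 1) m = fun ω => Function.update (pathSeeds C m a l m ω) l 0
      from funext pathSeeds_succ_left]
    exact measurable_update_left.comp hpath
  exact (hchild.prodMk hchildPath).comap_le

lemma IsSplitTree.measurable_comap_sum_suffix (hT : IsSplitTree m S C θ)
    (hθ : ∀ l, Measurable (Function.uncurry (θ l))) {d l i a : ℕ} (hl : l + d = m)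
    (hi : i < 2 ^ l) (ha : i * 2 ^ d ≤ a) (ha' : a ≤ (i + 1) * 2 ^ d) :
    Measurable[.comap (fun ω => (S l i ω, pathSeeds C m a l m ω)) inferInstance]
      (fun ω => ∑ j ∈ Finset.Ico a ((i + 1) * 2 ^ d), S m j ω) := by
  induction d generalizing l i with
  | zero =>
    obtain rfl : l = m := hl
    simp only [pow_zero, mul_one] at ha ha' ⊢
    rcases (show a = i ∨ a = i + 1 by omega) with rfl | rfl
    · simp only [Nat.Ico_succ_singleton, Finset.sum_singleton]
      exact measurable_fst.comp (comap_measurable _)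
    · simp
  | succ d ih =>
    obtain rfl | hlt := ha'.eq_or_lt
    · simp
    have hleL := hT.comap_child_le hθ hl hi ha hlt (c := 2 * i) (by omega)
    have hleR := hT.comap_child_le hθ hl hi ha hlt (c := 2 * i + 1) (by omega)
    rw [show (i + 1) * 2 ^ (d + 1) = (2 * i + 1 + 1) * 2 ^ d by ring] at hlt ⊢
    rw [show i * 2 ^ (d + 1) = 2 * i * 2 ^ d by ring] at ha
    have h2i1 : 2 * i + 1 < 2 ^ (l + 1) := by rw [pow_succ]; omega
    rcases le_or_gt ((2 * i + 1) * 2 ^ d) a with hmid | hmid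
    · exact (ih (by omega) h2i1 hmid hlt.le).mono hleR le_rfl
    · have hsplit : (fun ω => ∑ j ∈ Finset.Ico a ((2 * i + 1 + 1) * 2 ^ d), S m j ω)
          = fun ω => (∑ j ∈ Finset.Ico a ((2 * i + 1) * 2 ^ d), S m j ω)
            + S (l + 1) (2 * i + 1) ω := by
        funext ω
        rw [node_eq_sum_leaves hT.right (d := d) (by omega) h2i1,
          Finset.sum_Ico_consecutive _ hmid.le (by nlinarith)]
      rw [hsplit]
      exact ((ih (by omega) (by rw [pow_succ]; omega) ha hmid.le).mono hleL le_rfl).add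
        ((measurable_fst.comp (comap_measurable _)).mono hleR le_rfl)

lemma IsSplitTree.measurable_comap_sum_prefix (hT : IsSplitTree m S C θ)
    (hθ : ∀ l, Measurable (Function.uncurry (θ l))) {d l i b : ℕ} (hl : l + d = m)
    (hi : i < 2 ^ l) (hb : i * 2 ^ d ≤ b) (hb' : b ≤ (i + 1) * 2 ^ d) :
    Measurable[.comap (fun ω => (S l i ω, pathSeeds C m b l m ω)) inferInstance]
      (fun ω => ∑ j ∈ Finset.Ico (i * 2 ^ d) b, S m j ω) := by
  have hsplit : (fun ω => ∑ j ∈ Finset.Ico (i * 2 ^ d) b, S m j ω)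
      = fun ω => S l i ω - ∑ j ∈ Finset.Ico b ((i + 1) * 2 ^ d), S m j ω := by
    funext ω
    rw [node_eq_sum_leaves hT.right hl hi, ← Finset.sum_Ico_consecutive _ hb hb',
      add_sub_cancel_right]
  rw [hsplit]
  exact (measurable_fst.comp (comap_measurable _)).sub
    (hT.measurable_comap_sum_suffix hθ hl hi hb hb')

end DyadicTree

section Independence

variable {Ω : Type*} [MeasurableSpace Ω] {μ : Measure Ω} [IsFiniteMeasure μ] {m : ℕ}
  {S C : ℕ → ℕ → Ω → ℝ} {θ : ℕ → ℝ → ℝ → ℝ}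

lemma indepFun_rootAndSeedsBelow (hS : Measurable (S 0 0)) (hC : ∀ k j, Measurable (C k j))
    (hlevels : iIndepFun (fun k ω j => C k j ω) μ)
    (hroot : IndepFun (S 0 0) (fun ω (p : ℕ × ℕ) => C p.1 p.2 ω) μ) (n : ℕ) :
    IndepFun (rootAndSeedsBelow S C n) (fun ω j => C n j ω) μ := by
  have hlevel : ∀ k, Measurable fun ω j => C k j ω := fun k => measurable_pi_lambda _ (hC k)
  have hsplit : Measurable fun (F : ℕ × ℕ → ℝ) =>
      ((fun k j => if k < n then F (k, j) else 0 : ℕ → ℕ → ℝ), fun j => F (n, j)) := by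
    refine Measurable.prodMk (measurable_pi_lambda _ fun k => measurable_pi_lambda _ fun j => ?_)
      (by fun_prop)
    by_cases hk : k < n <;> simp only [hk, if_true, if_false] <;> fun_prop
  have hrestrict : Measurable fun (v : (k : Finset.range n) → ℕ → ℝ) (k j : ℕ) =>
      if hk : k < n then v ⟨k, Finset.mem_range.2 hk⟩ j else 0 := by
    refine measurable_pi_lambda _ fun k => measurable_pi_lambda _ fun j => ?_
    by_cases hk : k < n <;> simp only [hk, dif_pos, dif_neg, not_false_eq_true] <;> fun_prop
  have hseeds : IndepFun (fun ω (k j : ℕ) => if k < n then C k j ω else 0)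
      (fun ω j => C n j ω) μ := by
    convert (hlevels.indepFun_finset (Finset.range n) {n} (by simp) hlevel).comp hrestrict
      (measurable_pi_apply ⟨n, Finset.mem_singleton_self n⟩) using 1
    · funext ω k j
      by_cases hk : k < n <;> simp [hk]
    · rfl
  exact IndepFun.prodMk_left_of_prodMk_right hS
    (hsplit.fst.comp (measurable_pi_lambda _ fun p => hC p.1 p.2)) (hlevel n)
    (hroot.comp measurable_id hsplit) hseeds

lemma IsSplitTree.indepFun_pathSeeds (hT : IsSplitTree m S C θ)
    (hθ : ∀ l, Measurable (Function.uncurry (θ l))) (hS : ∀ l i, Measurable (S l i))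
    (hC : ∀ k j, Measurable (C k j))
    (hbase : ∀ n, IndepFun (rootAndSeedsBelow S C n) (fun ω j => C n j ω) μ)
    (hpair : ∀ k j j', j ≠ j' → IndepFun (C k j) (C k j') μ)
    {d l i a b : ℕ} (hl : l + (d + 1) = m) (hi : i < 2 ^ l)
    (hchildren : IndepFun (S (l + 1) (2 * i)) (S (l + 1) (2 * i + 1)) μ)
    (ha : a < (2 * i + 1) * 2 ^ d) (hb : (2 * i + 1) * 2 ^ d ≤ b) :
    IndepFun (fun ω => (S (l + 1) (2 * i) ω, pathSeeds C m a (l + 1) m ω))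
      (fun ω => (S (l + 1) (2 * i + 1) ω, pathSeeds C m b (l + 1) m ω)) μ := by
  have h2i : 2 * i < 2 ^ (l + 1) := by rw [pow_succ]; omega
  have h2i1 : 2 * i + 1 < 2 ^ (l + 1) := by rw [pow_succ]; omega
  suffices ∀ n, l + 1 ≤ n → n ≤ m →
      IndepFun (fun ω => (S (l + 1) (2 * i) ω, pathSeeds C m a (l + 1) n ω))
        (fun ω => (S (l + 1) (2 * i + 1) ω, pathSeeds C m b (l + 1) n ω)) μ from
    this m (by omega) le_rfl
  intro n hn
  induction n, hn using Nat.le_induction with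
  | base =>
    intro _
    simp only [pathSeeds_self_right]
    exact hchildren.comp (measurable_id.prodMk measurable_const)
      (measurable_id.prodMk measurable_const)
  | succ n hn ih =>
    intro hnm
    have hne : a / 2 ^ (m - n) ≠ b / 2 ^ (m - n) := by
      have hdvd : 2 ^ (m - n) ∣ (2 * i + 1) * 2 ^ d :=
        Dvd.dvd.mul_left (pow_dvd_pow 2 (by omega)) _
      exact ((Nat.div_lt_div_of_lt_of_dvd hdvd ha).trans_le (Nat.div_le_div_right hb)).ne
    have hnew : IndepFun
        (fun ω => ((S (l + 1) (2 * i) ω, pathSeeds C m a (l + 1) n ω),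
          (S (l + 1) (2 * i + 1) ω, pathSeeds C m b (l + 1) n ω)))
        (fun ω => (C n (a / 2 ^ (m - n)) ω, C n (b / 2 ^ (m - n)) ω)) μ :=
      (hbase n).of_measurable_comap
        (((hT.measurable_comap_rootAndSeedsBelow hθ hn (by omega) h2i).prodMk
          (measurable_comap_rootAndSeedsBelow_pathSeeds le_rfl)).prodMk
          ((hT.measurable_comap_rootAndSeedsBelow hθ hn (by omega) h2i1).prodMk
          (measurable_comap_rootAndSeedsBelow_pathSeeds le_rfl)))
        ((by fun_prop : Measurable fun v : ℕ → ℝ =>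
          (v (a / 2 ^ (m - n)), v (b / 2 ^ (m - n)))).comp (comap_measurable _))
    have hextend : Measurable fun q : (ℝ × (ℕ → ℝ)) × ℝ =>
        (q.1.1, Function.update q.1.2 n q.2) := by
      fun_prop
    convert ((hnew.prodProdProdComm ((hS _ _).prodMk (measurable_pathSeeds hC _ _ _ _))
      ((hS _ _).prodMk (measurable_pathSeeds hC _ _ _ _)) (hC _ _) (hC _ _) (ih (by omega))
      (hpair n _ _ hne)).comp hextend hextend) using 1 <;>
    · funext ω
      simp [pathSeeds_succ_right hn]

end Independence

section Distribution

variable {Ω : Type*} [MeasurableSpace Ω] {μ : Measure Ω} {m : ℕ} {S C : ℕ → ℕ → Ω → ℝ}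
  {θ : ℕ → ℝ → ℝ → ℝ} (ν : Measure ℝ)

lemma map_node_eq_convPow (hroot : μ.map (S 0 0) = convPow ν (2 ^ m))
    (hchildren : ∀ l i, l < m → i < 2 ^ l →
      μ.map (S (l + 1) (2 * i)) = convPow ν (2 ^ (m - (l + 1))) ∧
      μ.map (S (l + 1) (2 * i + 1)) = convPow ν (2 ^ (m - (l + 1))))
    {l i : ℕ} (hlm : l ≤ m) (hi : i < 2 ^ l) : μ.map (S l i) = convPow ν (2 ^ (m - l)) := by
  cases l with
  | zero =>
    obtain rfl : i = 0 := by simpa using hi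
    simpa using hroot
  | succ l =>
    have hj : i / 2 < 2 ^ l := by rw [pow_succ] at hi; omega
    rcases Nat.mod_two_eq_zero_or_one i with h | h
    · rw [show i = 2 * (i / 2) by omega]
      exact (hchildren l (i / 2) (by omega) hj).1
    · rw [show i = 2 * (i / 2) + 1 by omega]
      exact (hchildren l (i / 2) (by omega) hj).2

variable [IsProbabilityMeasure μ] [IsFiniteMeasure ν]

lemma IsSplitTree.map_sum_Ico_eq_convPow (hT : IsSplitTree m S C θ)
    (hθ : ∀ l, Measurable (Function.uncurry (θ l))) (hS : ∀ l i, Measurable (S l i))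
    (hC : ∀ k j, Measurable (C k j))
    (hbase : ∀ n, IndepFun (rootAndSeedsBelow S C n) (fun ω j => C n j ω) μ)
    (hpair : ∀ k j j', j ≠ j' → IndepFun (C k j) (C k j') μ)
    (hchildren : ∀ l i, l < m → i < 2 ^ l →
      IndepFun (S (l + 1) (2 * i)) (S (l + 1) (2 * i + 1)) μ)
    (hleaf : ∀ j < 2 ^ m, μ.map (S m j) = convPow ν 1)
    {d l i a b : ℕ} (hl : l + d = m) (hi : i < 2 ^ l) (ha : i * 2 ^ d ≤ a) (hab : a ≤ b)
    (hb : b ≤ (i + 1) * 2 ^ d) :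
    μ.map (fun ω => ∑ j ∈ Finset.Ico a b, S m j ω) = convPow ν (b - a) := by
  induction d generalizing l i a b with
  | zero =>
    obtain rfl : l = m := hl
    simp only [pow_zero, mul_one] at ha hb
    rcases (show b = a ∨ a = i ∧ b = i + 1 by omega) with rfl | ⟨rfl, rfl⟩
    · simp [Measure.map_const, convPow_zero]
    · simpa using hleaf a hi
  | succ d ih =>
    have h2i : 2 * i < 2 ^ (l + 1) := by rw [pow_succ]; omega
    have h2i1 : 2 * i + 1 < 2 ^ (l + 1) := by rw [pow_succ]; omega
    rw [show i * 2 ^ (d + 1) = 2 * i * 2 ^ d by ring] at ha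
    rw [show (i + 1) * 2 ^ (d + 1) = (2 * i + 1 + 1) * 2 ^ d by ring] at hb
    set mid := (2 * i + 1) * 2 ^ d
    rcases le_or_gt b mid with hleft | hleft
    · exact ih (by omega) h2i ha hab hleft
    rcases le_or_gt mid a with hright | hright
    · exact ih (by omega) h2i1 hright hab hb
    have hXY : IndepFun (fun ω => ∑ j ∈ Finset.Ico a mid, S m j ω)
        (fun ω => ∑ j ∈ Finset.Ico mid b, S m j ω) μ :=
      (hT.indepFun_pathSeeds hθ hS hC hbase hpair (d := d) (by omega) hi
        (hchildren l i (by omega) hi) hright hleft.le).of_measurable_comap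
        (hT.measurable_comap_sum_suffix hθ (by omega) h2i ha hright.le)
        (hT.measurable_comap_sum_prefix hθ (by omega) h2i1 hleft.le hb)
    have hsplit : (fun ω => ∑ j ∈ Finset.Ico a b, S m j ω)
        = fun ω => (∑ j ∈ Finset.Ico a mid, S m j ω) + ∑ j ∈ Finset.Ico mid b, S m j ω :=
      funext fun ω => (Finset.sum_Ico_consecutive _ hright.le hleft.le).symm
    rw [hsplit, show b - a = (mid - a) + (b - mid) by omega]
    exact hXY.map_add_eq_convPow ν (Finset.measurable_sum _ fun j _ => hS m j)
      (Finset.measurable_sum _ fun j _ => hS m j) (ih (by omega) h2i ha hright.le le_rfl)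
      (ih (by omega) h2i1 le_rfl hleft.le hb)

end Distribution

theorem stmt_16_general
    (Ω : Type*) [MeasureSpace Ω] [IsProbabilityMeasure (ℙ : Measure Ω)]
    (ν : Measure ℝ) [IsProbabilityMeasure ν]
    (m : ℕ)
    (S : ℕ → ℕ → Ω → ℝ) (C : ℕ → ℕ → Ω → ℝ)
    (θ : ℕ → ℝ → ℝ → ℝ)
    (hSmeas : ∀ l i, Measurable (S l i)) (hCmeas : ∀ l i, Measurable (C l i))
    (hθmeas : ∀ l, Measurable (Function.uncurry (θ l)))
    -- the root has distribution X^{*U}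
    (hroot : Measure.map (S 0 0) ℙ = convPow ν (2 ^ m))
    -- within each level, the seeds (hash values of a k-wise independent hash) are
    -- k-wise independent
    (hkwise : ∀ l (J : Finset ℕ), J.card ≤ 2 →
      iIndepFun (fun j : J => C l j.1) ℙ)
    -- the per-level hash functions are independent across levels
    (hlevels : iIndepFun
      (fun l : ℕ => fun ω (i : ℕ) => C l i ω) ℙ)
    -- and the seeds are independent of the root
    (hrootindep : IndepFun (S 0 0) (fun ω (p : ℕ × ℕ) => C p.1 p.2 ω) ℙ)
    -- each left child is a deterministic function of the parent's value and the seed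
    (hsplitL : ∀ l i, l < m → i < 2 ^ l →
      S (l + 1) (2 * i) = fun ω => θ l (C l i ω) (S l i ω))
    -- the parent is the sum of its two children
    (hsplitR : ∀ l i, l < m → i < 2 ^ l →
      S (l + 1) (2 * i + 1) = S l i - S (l + 1) (2 * i))
    -- property (I): the two children of each node are i.i.d. with distribution
    -- X^{*(U/2^{l+1})}
    (hI : ∀ l i, l < m → i < 2 ^ l →
      IndepFun (S (l + 1) (2 * i)) (S (l + 1) (2 * i + 1)) ℙ ∧
      Measure.map (S (l + 1) (2 * i)) ℙ = convPow ν (2 ^ (m - (l + 1))) ∧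
      Measure.map (S (l + 1) (2 * i + 1)) ℙ = convPow ν (2 ^ (m - (l + 1)))) :
    ∀ a b : ℕ, a ≤ b → b < 2 ^ m →
      Measure.map (fun ω => ∑ i ∈ Finset.Ico a b, S m i ω) ℙ = convPow ν (b - a) := by
  intro a b hab hb
  have hleaf (j : ℕ) (hj : j < 2 ^ m) : Measure.map (S m j) ℙ = convPow ν 1 := by
    simpa using map_node_eq_convPow ν hroot (fun l i hl hi => (hI l i hl hi).2) le_rfl hj
  exact IsSplitTree.map_sum_Ico_eq_convPow ν ⟨hsplitL, hsplitR⟩ hθmeas hSmeas hCmeas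
    (indepFun_rootAndSeedsBelow (hSmeas 0 0) hCmeas hlevels hrootindep)
    (fun k _ _ hne => indepFun_of_forall_card_le_two (hkwise k) hne)
    (fun l i hl hi => (hI l i hl hi).1) hleaf (d := m) (l := 0) (i := 0) (by simp) (by simp)
    (by simp) hab (by simpa using hb.le)

/-- In the dyadic simulation tree built with 2-wise independent hash functions
at every level (seeds 2-wise independent within each level, fresh across levels and
independent of the root; splits deterministic in parent value and seed, parent the sum of its
children, property (I) holding), for any `0 ≤ a ≤ b < U` the range-sum
`S[a,b) = X_a + ... + X_{b-1}` has marginal distribution exactly `X^{*(b-a)}`. -/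
theorem stmt_16
    (Ω : Type*) [MeasureSpace Ω] [IsProbabilityMeasure (ℙ : Measure Ω)]
    (ν : Measure ℝ) [IsProbabilityMeasure ν]
    (m : ℕ) (hm : 0 < m)
    (S : ℕ → ℕ → Ω → ℝ) (C : ℕ → ℕ → Ω → ℝ)
    (θ : ℕ → ℝ → ℝ → ℝ)
    (hSmeas : ∀ l i, Measurable (S l i)) (hCmeas : ∀ l i, Measurable (C l i))
    (hθmeas : ∀ l, Measurable (Function.uncurry (θ l)))
    -- the root has distribution X^{*U}
    (hroot : Measure.map (S 0 0) ℙ = convPow ν (2 ^ m))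
    -- within each level, the seeds (hash values of a k-wise independent hash) are
    -- k-wise independent
    (hkwise : ∀ l (J : Finset ℕ), J.card ≤ 2 →
      iIndepFun (fun j : J => C l j.1) ℙ)
    -- the per-level hash functions are independent across levels
    (hlevels : iIndepFun
      (fun l : ℕ => fun ω (i : ℕ) => C l i ω) ℙ)
    -- and the seeds are independent of the root
    (hrootindep : IndepFun (S 0 0) (fun ω (p : ℕ × ℕ) => C p.1 p.2 ω) ℙ)
    -- each left child is a deterministic function of the parent's value and the seed
    (hsplitL : ∀ l i, l < m → i < 2 ^ l →
      S (l + 1) (2 * i) = fun ω => θ l (C l i ω) (S l i ω))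
    -- the parent is the sum of its two children
    (hsplitR : ∀ l i, l < m → i < 2 ^ l →
      S (l + 1) (2 * i + 1) = S l i - S (l + 1) (2 * i))
    -- property (I): the two children of each node are i.i.d. with distribution
    -- X^{*(U/2^{l+1})}
    (hI : ∀ l i, l < m → i < 2 ^ l →
      IndepFun (S (l + 1) (2 * i)) (S (l + 1) (2 * i + 1)) ℙ ∧
      Measure.map (S (l + 1) (2 * i)) ℙ = convPow ν (2 ^ (m - (l + 1))) ∧
      Measure.map (S (l + 1) (2 * i + 1)) ℙ = convPow ν (2 ^ (m - (l + 1)))) :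
    ∀ a b : ℕ, a ≤ b → b < 2 ^ m →
      Measure.map (fun ω => ∑ i ∈ Finset.Ico a b, S m i ω) ℙ = convPow ν (b - a) :=
  stmt_16_general Ω ν m S C θ hSmeas hCmeas hθmeas hroot hkwise hlevels hrootindep hsplitL hsplitR
    hI
end
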